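/- arXiv:2201.10196 — 2 statements merged into one kernel-verified Lean document; each statement's English description precedes it below -/
import Mathlib

section
/- Let (X,d,μ) be a space of homogeneous type with upper dimension ω := log₂ C_μ. Then μ has a weak lower bound ω (i.e., there exist a constant C > 0 and a point x₀ ∈ X such that μ(B(x₀,r)) ≥ C·r^ω for every r ≥ 1) if and only if μ has a lower bound ω (i.e., there exists a constant C' > 0 such that μ(B(x,r)) ≥ C'·r^ω for every x ∈ X and every r > 0). -/
open MeasureTheory ENNReal

noncomputable section

namespace SHT

variable {X : Type*}

/-- The quasi-metric ball `B(x,r) := {y : d(x,y) < r}`. -/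
def ball (d : X → X → ℝ) (x : X) (r : ℝ) : Set X := {y | d x y < r}

/-- `(X, d, μ)` is a space of homogeneous type with quasi-triangle constant `A₀`
and doubling constant `Cμ`. -/
structure IsSHT [MeasurableSpace X] (d : X → X → ℝ) (μ : Measure X) (A₀ Cμ : ℝ) : Prop where
  one_le_A : 1 ≤ A₀
  nonneg : ∀ x y, 0 ≤ d x y
  eq_zero_iff : ∀ x y, d x y = 0 ↔ x = y
  symm : ∀ x y, d x y = d y x
  triangle : ∀ x y z, d x z ≤ A₀ * (d x y + d y z)
  measurable_ball : ∀ x r, MeasurableSet (ball d x r)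
  one_le_C : 1 ≤ Cμ
  ball_pos : ∀ x, ∀ r : ℝ, 0 < r → 0 < μ (ball d x r)
  ball_lt_top : ∀ x, ∀ r : ℝ, 0 < r → μ (ball d x r) < ⊤
  doubling : ∀ x, ∀ r : ℝ, 0 < r →
    μ (ball d x (2 * r)) ≤ ENNReal.ofReal Cμ * μ (ball d x r)

/-!
Iterating the doubling condition ⌈log₂ (t/s)⌉ times gives
`μ(B(x,t)) ≤ Cμ · (t/s)^ω · μ(B(x,s))` for `0 < s ≤ t`, because with `λ := t/s`
`Cμ^⌈log₂ λ⌉ ≤ Cμ · Cμ^(log₂ λ) = Cμ · λ^(log₂ Cμ)`.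
Given the weak lower bound at `x₀`, take `R := max {1, r, d(x₀,x)}`: the quasi-triangle inequality
puts `B(x₀,R)` inside `B(x, 2A₀R)`, so
`C·R^ω ≤ μ(B(x,2A₀R)) ≤ Cμ·(2A₀R/r)^ω·μ(B(x,r))`, and the factor `R^ω` cancels.
-/

lemma _root_.Real.rpow_logb_comm (b : ℝ) {x y : ℝ} (hx : 0 < x) (hy : 0 < y) :
    x ^ Real.logb b y = y ^ Real.logb b x := by
  rw [Real.rpow_def_of_pos hx, Real.rpow_def_of_pos hy, Real.logb, Real.logb]
  ring_nf

lemma _root_.Real.le_two_pow_ceil_logb {t : ℝ} (ht : 0 < t) : t ≤ 2 ^ ⌈Real.logb 2 t⌉₊ := by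
  rw [← Real.rpow_natCast, ← Real.logb_le_iff_le_rpow one_lt_two ht]
  exact Nat.le_ceil _

lemma _root_.Real.pow_ceil_logb_le {C t : ℝ} (hC : 1 ≤ C) (ht : 1 ≤ t) :
    C ^ ⌈Real.logb 2 t⌉₊ ≤ C * t ^ Real.logb 2 C := by
  have hceil : (⌈Real.logb 2 t⌉₊ : ℝ) ≤ Real.logb 2 t + 1 :=
    (Nat.ceil_lt_add_one (Real.logb_nonneg one_lt_two ht)).le
  calc C ^ ⌈Real.logb 2 t⌉₊ = C ^ (⌈Real.logb 2 t⌉₊ : ℝ) := (Real.rpow_natCast C _).symm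
    _ ≤ C ^ (Real.logb 2 t + 1) := Real.rpow_le_rpow_of_exponent_le hC hceil
    _ = C * t ^ Real.logb 2 C := by
      rw [Real.rpow_add_one (by positivity), Real.rpow_logb_comm 2 (by positivity) (by positivity),
        mul_comm]

lemma ball_subset_ball {d : X → X → ℝ} (x : X) {r r' : ℝ} (h : r ≤ r') :
    ball d x r ⊆ ball d x r' :=
  fun _ hy => lt_of_lt_of_le hy h

section

variable [MeasurableSpace X] {d : X → X → ℝ} {μ : Measure X} {A₀ Cμ : ℝ}

lemma IsSHT.ball_subset_ball_two_mul (h : IsSHT d μ A₀ Cμ) {x₀ x : X} {R : ℝ}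
    (hx : d x₀ x ≤ R) : ball d x₀ R ⊆ ball d x (2 * A₀ * R) := by
  intro y (hy : d x₀ y < R)
  have htri : d x y ≤ A₀ * (d x₀ x + d x₀ y) := h.symm x x₀ ▸ h.triangle x x₀ y
  have hA₀ : 0 < A₀ := one_pos.trans_le h.one_le_A
  show d x y < 2 * A₀ * R
  nlinarith

lemma IsSHT.measure_ball_two_pow_mul_le (h : IsSHT d μ A₀ Cμ) (x : X) {s : ℝ} (hs : 0 < s)
    (n : ℕ) : μ (ball d x (2 ^ n * s)) ≤ ENNReal.ofReal Cμ ^ n * μ (ball d x s) := by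
  induction n with
  | zero => simp
  | succ n ih =>
    calc μ (ball d x (2 ^ (n + 1) * s)) = μ (ball d x (2 * (2 ^ n * s))) := by ring_nf
      _ ≤ ENNReal.ofReal Cμ * μ (ball d x (2 ^ n * s)) := h.doubling x _ (by positivity)
      _ ≤ ENNReal.ofReal Cμ * (ENNReal.ofReal Cμ ^ n * μ (ball d x s)) := by gcongr
      _ = ENNReal.ofReal Cμ ^ (n + 1) * μ (ball d x s) := by ring

lemma IsSHT.measure_ball_le_of_le (h : IsSHT d μ A₀ Cμ) (x : X) {s t : ℝ} (hs : 0 < s)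
    (hst : s ≤ t) :
    μ (ball d x t) ≤ ENNReal.ofReal (Cμ * (t / s) ^ Real.logb 2 Cμ) * μ (ball d x s) := by
  set n := ⌈Real.logb 2 (t / s)⌉₊
  have ht : t ≤ 2 ^ n * s :=
    (div_le_iff₀ hs).1 (Real.le_two_pow_ceil_logb (div_pos (hs.trans_le hst) hs))
  calc μ (ball d x t) ≤ μ (ball d x (2 ^ n * s)) := measure_mono (ball_subset_ball x ht)
    _ ≤ ENNReal.ofReal Cμ ^ n * μ (ball d x s) := h.measure_ball_two_pow_mul_le x hs n
    _ ≤ ENNReal.ofReal (Cμ * (t / s) ^ Real.logb 2 Cμ) * μ (ball d x s) := by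
      rw [← ENNReal.ofReal_pow (zero_le_one.trans h.one_le_C)]
      gcongr
      exact Real.pow_ceil_logb_le h.one_le_C ((one_le_div hs).2 hst)

theorem IsSHT.lower_bound_of_weak_lower_bound (h : IsSHT d μ A₀ Cμ) {C : ℝ} {x₀ : X}
    (hx₀ : ∀ r : ℝ, 1 ≤ r → ENNReal.ofReal (C * r ^ Real.logb 2 Cμ) ≤ μ (ball d x₀ r))
    (x : X) {r : ℝ} (hr : 0 < r) :
    ENNReal.ofReal (C / (Cμ * (2 * A₀) ^ Real.logb 2 Cμ) * r ^ Real.logb 2 Cμ) ≤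
      μ (ball d x r) := by
  set ω := Real.logb 2 Cμ
  set R := max 1 (max r (d x₀ x))
  have hR1 : 1 ≤ R := le_max_left _ _
  have hrR : r ≤ R := (le_max_left _ _).trans (le_max_right _ _)
  have hxR : d x₀ x ≤ R := (le_max_right _ _).trans (le_max_right _ _)
  have hA₀ : 1 ≤ A₀ := h.one_le_A
  have hCμ : 0 < Cμ := one_pos.trans_le h.one_le_C
  have hr2AR : r ≤ 2 * A₀ * R := by nlinarith
  have key : ENNReal.ofReal (C * R ^ ω) ≤
      ENNReal.ofReal (Cμ * (2 * A₀ * R / r) ^ ω) * μ (ball d x r) :=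
    calc ENNReal.ofReal (C * R ^ ω) ≤ μ (ball d x₀ R) := hx₀ R hR1
      _ ≤ μ (ball d x (2 * A₀ * R)) := measure_mono (h.ball_subset_ball_two_mul hxR)
      _ ≤ _ := h.measure_ball_le_of_le x hr hr2AR
  have hrescale : C / (Cμ * (2 * A₀) ^ ω) * r ^ ω = C * R ^ ω / (Cμ * (2 * A₀ * R / r) ^ ω) := by
    have : 0 < R := one_pos.trans_le hR1
    rw [Real.div_rpow (by positivity) hr.le, Real.mul_rpow (by positivity) this.le]
    field_simp
  rw [hrescale, ENNReal.ofReal_div_of_pos (by positivity)]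
  exact ENNReal.div_le_of_le_mul' key

end

/-- On a space of homogeneous type with upper dimension
`ω := log₂ Cμ`, the measure has a weak lower bound `ω` (a lower mass bound
`μ(B(x₀,r)) ≥ C·r^ω` for a single point `x₀` and all `r ≥ 1`) if and only if it
has a (global) lower bound `ω` (`μ(B(x,r)) ≥ C'·r^ω` for all `x` and all `r > 0`). -/
theorem weak_lower_bound_iff_lower_bound
    [MeasurableSpace X] [Nonempty X]
    (d : X → X → ℝ) (μ : Measure X) (A₀ Cμ : ℝ)
    (hSHT : IsSHT d μ A₀ Cμ) (ω : ℝ) (hω : ω = Real.logb 2 Cμ) :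
    (∃ C : ℝ, 0 < C ∧ ∃ x₀ : X, ∀ r : ℝ, 1 ≤ r →
        ENNReal.ofReal (C * r ^ ω) ≤ μ (ball d x₀ r)) ↔
      (∃ C' : ℝ, 0 < C' ∧ ∀ x : X, ∀ r : ℝ, 0 < r →
        ENNReal.ofReal (C' * r ^ ω) ≤ μ (ball d x r)) := by
  subst hω
  constructor
  · rintro ⟨C, hC, x₀, hx₀⟩
    have hA₀ : 0 < A₀ := one_pos.trans_le hSHT.one_le_A
    have hCμ : 0 < Cμ := one_pos.trans_le hSHT.one_le_C
    exact ⟨_, by positivity, fun x r hr => hSHT.lower_bound_of_weak_lower_bound hx₀ x hr⟩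
  · rintro ⟨C', hC', hC'bound⟩
    exact ⟨C', hC', Classical.arbitrary X, fun r hr => hC'bound _ r (one_pos.trans_le hr)⟩

end SHT
end
end

section
/- Let (X,d,μ) be a space of homogeneous type, let δ ∈ (0,1) with δ ≤ (2A₀)^{-10} be fixed, let s ∈ (0,∞), p ∈ (0,1], and ε ∈ (0,s). Let u : X → ℝ be measurable, (g_j)_{j∈ℤ} ∈ 𝔻^s(u), k ∈ ℤ, and x ∈ X, and define g := ( Σ_{j=k−2}^{∞} δ^{j(s−ε)p}·g_j^p )^{1/p}. Then g is an ε-gradient of u on the ball B(x,δ^{k−1}): there is a μ-null set E such that for all y, z ∈ B(x,δ^{k−1}) ∖ E one has |u(y)−u(z)| ≤ d(y,z)^ε·[g(y)+g(z)]. -/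
/-!
If `y ≠ z` lie in `B(x, δ^{k-1})`, pick the scale `j` with `δ^{j+1} ≤ d(y,z) < δ^j`. The
quasi-triangle inequality and `2 A₀ δ ≤ 1` give `d(y,z) < δ^{k-2}`, so `j ≥ k - 2` and the term
`δ^{j(s-ε)p} g_j^p` occurs in the sum defining `g`; hence `g ≥ δ^{j(s-ε)} g_j`. Splitting
`d(y,z)^s = d(y,z)^ε d(y,z)^{s-ε} ≤ d(y,z)^ε δ^{j(s-ε)}` in the Hajłasz inequality at scale `j`
concludes.
-/

open MeasureTheory ENNReal

noncomputable section

namespace SHT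

variable {X : Type*}

/-- `(g_k)_{k ∈ ℤ}` is an `s`-Hajłasz gradient of `u`. -/
def IsHajlaszGradient [MeasurableSpace X] (d : X → X → ℝ) (μ : Measure X) (δ s : ℝ)
    (u : X → ℝ) (g : ℤ → X → ℝ) : Prop :=
  (∀ k x, 0 ≤ g k x) ∧ (∀ k, Measurable (g k)) ∧
    ∃ E : Set X, μ E = 0 ∧ ∀ k : ℤ, ∀ x ∉ E, ∀ y ∉ E,
      δ ^ (k + 1) ≤ d x y → d x y < δ ^ k →
      |u x - u y| ≤ d x y ^ s * (g k x + g k y)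

section Scales

variable {δ r : ℝ}

lemma exists_zpow_succ_le_lt (hδ0 : 0 < δ) (hδ1 : δ < 1) (hr : 0 < r) :
    ∃ j : ℤ, δ ^ (j + 1) ≤ r ∧ r < δ ^ j := by
  obtain ⟨n, hn, hn'⟩ := exists_mem_Ico_zpow hr ((one_lt_inv₀ hδ0).mpr hδ1)
  refine ⟨-n - 1, ?_, ?_⟩
  · rwa [sub_add_cancel, ← inv_zpow']
  · rwa [show -n - 1 = -(n + 1) by ring, ← inv_zpow']

lemma le_of_zpow_succ_le_of_lt_zpow (hδ0 : 0 < δ) (hδ1 : δ < 1) {j m : ℤ}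
    (hj : δ ^ (j + 1) ≤ r) (hm : r < δ ^ m) : m ≤ j := by
  have := (zpow_lt_zpow_iff_right_of_lt_one₀ hδ0 hδ1).mp (hj.trans_lt hm)
  omega

lemma mul_le_one_of_le_zpow_neg {a : ℝ} {n : ℤ} (ha : 1 ≤ a) (hn : 1 ≤ n)
    (hδ : δ ≤ a ^ (-n)) : a * δ ≤ 1 :=
  calc a * δ ≤ a * a ^ (-n) := mul_le_mul_of_nonneg_left hδ (by linarith)
    _ = a ^ (1 - n) := by rw [sub_eq_add_neg, zpow_add₀ (by positivity), zpow_one]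
    _ ≤ 1 := zpow_le_one_of_nonpos₀ ha (by omega)

lemma rpow_le_rpow_mul_rpow_sub {D s ε : ℝ} (hD : 0 < D) (hDr : D ≤ r) (hεs : ε ≤ s) :
    D ^ s ≤ D ^ ε * r ^ (s - ε) :=
  calc D ^ s = D ^ ε * D ^ (s - ε) := by rw [← Real.rpow_add hD, add_sub_cancel]
    _ ≤ D ^ ε * r ^ (s - ε) := by
      gcongr

end Scales

lemma _root_.ENNReal.le_tsum_rpow_one_div {ι : Type*} (f : ι → ℝ≥0∞) (i : ι) {p : ℝ}
    (hp : 0 < p) : f i ≤ (∑' i, f i ^ p) ^ (1 / p) := by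
  calc f i = (f i ^ p) ^ (1 / p) := by rw [← ENNReal.rpow_mul, mul_one_div_cancel hp.ne', rpow_one]
    _ ≤ _ := by gcongr; exact ENNReal.le_tsum i

section IsSHT

variable [MeasurableSpace X] {d : X → X → ℝ} {μ : Measure X} {A₀ Cμ : ℝ}

lemma IsSHT.dist_pos (h : IsSHT d μ A₀ Cμ) {y z : X} (hyz : y ≠ z) : 0 < d y z :=
  (h.nonneg y z).lt_of_ne' (mt (h.eq_zero_iff y z).mp hyz)

lemma IsSHT.dist_lt_of_mem_ball (h : IsSHT d μ A₀ Cμ) {x y z : X} {r : ℝ}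
    (hy : y ∈ ball d x r) (hz : z ∈ ball d x r) : d y z < 2 * A₀ * r := by
  have hyx : d y x < r := h.symm y x ▸ hy
  calc d y z ≤ A₀ * (d y x + d x z) := h.triangle y x z
    _ < A₀ * (r + r) := by
      gcongr
      · linarith [h.one_le_A]
      · exact hz
    _ = 2 * A₀ * r := by ring

lemma IsSHT.dist_lt_zpow_pred_of_mem_ball (h : IsSHT d μ A₀ Cμ) {δ : ℝ} (hδ : 0 < δ)
    (hAδ : 2 * A₀ * δ ≤ 1) {x y z : X} {n : ℤ} (hy : y ∈ ball d x (δ ^ n))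
    (hz : z ∈ ball d x (δ ^ n)) : d y z < δ ^ (n - 1) :=
  calc d y z < 2 * A₀ * δ ^ n := h.dist_lt_of_mem_ball hy hz
    _ = 2 * A₀ * δ * δ ^ (n - 1) := by
      rw [← sub_add_cancel n 1, zpow_add_one₀ hδ.ne', add_sub_cancel_right]; ring
    _ ≤ δ ^ (n - 1) := mul_le_of_le_one_left (zpow_pos hδ _).le hAδ

end IsSHT

/-- For `t = s - ε` and `m = k - 2` this is the function `g` of the theorem. -/
def weightedSum (δ t p : ℝ) (g : ℤ → X → ℝ) (m : ℤ) (y : X) : ℝ≥0∞ :=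
  (∑' j : {j : ℤ // m ≤ j},
    ENNReal.ofReal ((δ ^ (j : ℤ)) ^ (t * p)) * ENNReal.ofReal (g j y) ^ p) ^ (1 / p)

lemma ofReal_mul_le_weightedSum {δ t p : ℝ} (hδ : 0 < δ) (hp : 0 < p) (g : ℤ → X → ℝ)
    {m j : ℤ} (hj : m ≤ j) (y : X) :
    ENNReal.ofReal ((δ ^ j) ^ t) * ENNReal.ofReal (g j y) ≤ weightedSum δ t p g m y := by
  have hterm : ∀ i : {j : ℤ // m ≤ j},
      ENNReal.ofReal ((δ ^ (i : ℤ)) ^ (t * p)) * ENNReal.ofReal (g i y) ^ p =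
        (ENNReal.ofReal ((δ ^ (i : ℤ)) ^ t) * ENNReal.ofReal (g i y)) ^ p := fun i => by
    have hδi : 0 ≤ δ ^ (i : ℤ) := (zpow_pos hδ _).le
    rw [ENNReal.mul_rpow_of_nonneg _ _ hp.le, Real.rpow_mul hδi,
      ENNReal.ofReal_rpow_of_nonneg (Real.rpow_nonneg hδi _) hp.le]
  simp only [weightedSum, hterm]
  exact ENNReal.le_tsum_rpow_one_div
    (fun i : {j : ℤ // m ≤ j} => ENNReal.ofReal ((δ ^ (i : ℤ)) ^ t) * ENNReal.ofReal (g i y))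
    ⟨j, hj⟩ hp

theorem sum_is_gradient_on_ball_general
    [MeasurableSpace X] (d : X → X → ℝ) (μ : Measure X) (A₀ Cμ δ : ℝ)
    (hSHT : IsSHT d μ A₀ Cμ)
    (hδ0 : 0 < δ) (hδ1 : δ < 1) (hδA : δ ≤ (2 * A₀) ^ (-10 : ℤ))
    (s p ε : ℝ) (hp0 : 0 < p)
    (hεs : ε < s)
    (u : X → ℝ) (g : ℤ → X → ℝ)
    (hg : IsHajlaszGradient d μ δ s u g)
    (k : ℤ) (x : X) :
    ∃ E : Set X, μ E = 0 ∧
      ∀ y ∈ ball d x (δ ^ (k - 1)) \ E, ∀ z ∈ ball d x (δ ^ (k - 1)) \ E,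
        ENNReal.ofReal |u y - u z| ≤
          ENNReal.ofReal (d y z ^ ε) *
            ((∑' j : {j : ℤ // k - 2 ≤ j},
                ENNReal.ofReal ((δ ^ (j : ℤ)) ^ ((s - ε) * p)) *
                  ENNReal.ofReal (g j y) ^ p) ^ (1 / p) +
              (∑' j : {j : ℤ // k - 2 ≤ j},
                ENNReal.ofReal ((δ ^ (j : ℤ)) ^ ((s - ε) * p)) *
                  ENNReal.ofReal (g j z) ^ p) ^ (1 / p)) := by
  obtain ⟨hg_nonneg, -, E, hE, hgE⟩ := hg
  refine ⟨E, hE, ?_⟩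
  rintro y ⟨hy, hyE⟩ z ⟨hz, hzE⟩
  rcases eq_or_ne y z with rfl | hyz
  · simp
  have hD := hSHT.dist_pos hyz
  obtain ⟨j, hj, hj'⟩ := exists_zpow_succ_le_lt hδ0 hδ1 hD
  have hAδ : 2 * A₀ * δ ≤ 1 :=
    mul_le_one_of_le_zpow_neg (by linarith [hSHT.one_le_A]) (by norm_num) hδA
  have hD_lt : d y z < δ ^ (k - 2) := by
    simpa [sub_sub, one_add_one_eq_two] using
      hSHT.dist_lt_zpow_pred_of_mem_ball hδ0 hAδ hy hz
  have hjk := le_of_zpow_succ_le_of_lt_zpow hδ0 hδ1 hj hD_lt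
  have hgy := hg_nonneg j y
  have hgz := hg_nonneg j z
  calc ENNReal.ofReal |u y - u z|
      ≤ ENNReal.ofReal (d y z ^ ε * (δ ^ j) ^ (s - ε) * (g j y + g j z)) := by
        refine ENNReal.ofReal_le_ofReal ((hgE j y hyE z hzE hj hj').trans ?_)
        gcongr
        exact rpow_le_rpow_mul_rpow_sub hD hj'.le hεs.le
    _ = ENNReal.ofReal (d y z ^ ε) *
          (ENNReal.ofReal ((δ ^ j) ^ (s - ε)) * ENNReal.ofReal (g j y) +
            ENNReal.ofReal ((δ ^ j) ^ (s - ε)) * ENNReal.ofReal (g j z)) := by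
        rw [mul_assoc, ENNReal.ofReal_mul (by positivity), mul_add,
          ENNReal.ofReal_add (by positivity) (by positivity),
          ENNReal.ofReal_mul (by positivity), ENNReal.ofReal_mul (by positivity)]
    _ ≤ ENNReal.ofReal (d y z ^ ε) *
          (weightedSum δ (s - ε) p g (k - 2) y + weightedSum δ (s - ε) p g (k - 2) z) := by
        gcongr <;> exact ofReal_mul_le_weightedSum hδ0 hp0 g hjk _

/-- Let `s > 0`, `p ∈ (0,1]`, `ε ∈ (0,s)`, `(g_j) ∈ 𝔻^s(u)`,
`k ∈ ℤ` and `x ∈ X`. Then `g := (Σ_{j ≥ k-2} δ^{j(s-ε)p} g_j^p)^{1/p}`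
(valued in `[0,∞]`) is an `ε`-gradient of `u` on the ball `B(x, δ^{k-1})`:
off a `μ`-null set, `|u(y) - u(z)| ≤ d(y,z)^ε (g(y) + g(z))` for
`y, z ∈ B(x, δ^{k-1})`. -/
theorem sum_is_gradient_on_ball
    [MeasurableSpace X] (d : X → X → ℝ) (μ : Measure X) (A₀ Cμ δ : ℝ)
    (hSHT : IsSHT d μ A₀ Cμ)
    (hδ0 : 0 < δ) (hδ1 : δ < 1) (hδA : δ ≤ (2 * A₀) ^ (-10 : ℤ))
    (s p ε : ℝ) (hs : 0 < s) (hp0 : 0 < p) (hp1 : p ≤ 1)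
    (hε0 : 0 < ε) (hεs : ε < s)
    (u : X → ℝ) (hu : Measurable u) (g : ℤ → X → ℝ)
    (hg : IsHajlaszGradient d μ δ s u g)
    (k : ℤ) (x : X) :
    ∃ E : Set X, μ E = 0 ∧
      ∀ y ∈ ball d x (δ ^ (k - 1)) \ E, ∀ z ∈ ball d x (δ ^ (k - 1)) \ E,
        ENNReal.ofReal |u y - u z| ≤
          ENNReal.ofReal (d y z ^ ε) *
            ((∑' j : {j : ℤ // k - 2 ≤ j},
                ENNReal.ofReal ((δ ^ (j : ℤ)) ^ ((s - ε) * p)) *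
                  ENNReal.ofReal (g j y) ^ p) ^ (1 / p) +
              (∑' j : {j : ℤ // k - 2 ≤ j},
                ENNReal.ofReal ((δ ^ (j : ℤ)) ^ ((s - ε) * p)) *
                  ENNReal.ofReal (g j z) ^ p) ^ (1 / p)) :=
  sum_is_gradient_on_ball_general d μ A₀ Cμ δ hSHT hδ0 hδ1 hδA s p ε hp0 hεs u g hg k x

end SHT
end
end
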